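/- Let g be C¹ near 0 with g(0)=0, g'(0)=λ²>0, and suppose g(x)=λX(x)/(1+h(X(x))) for the function X with X²=2G, xX>0 (x≠0), where h is an odd C¹ function. Then with f(s):=(1/λ)h'(√(2s)), the Chouikha equation d/dx[G(x)/g(x)²]=f(G(x)) holds for |x| small. -/

import Mathlib

/-!
Away from `0`, the Urabe relation `g = λX/(1 + h(X))` together with `X² = 2G` gives
`G/g² = (1 + h(X))²/(2λ²)`. Differentiating, with `X' = g/X = λ/(1 + h(X))`, yields `h'(X)/λ`.
Since `h` is odd, `h'` is even, so `h'(X) = h'(|X|) = h'(√(2G))`, which is `λ f(G)`.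
-/

open Set Filter Topology

theorem hasDerivAt_integral_of_continuousOn {E : Type*} [NormedAddCommGroup E]
    [NormedSpace ℝ E] [CompleteSpace E] {g : ℝ → E} {s : Set ℝ} [s.OrdConnected] {a x : ℝ}
    (hs : IsOpen s) (hg : ContinuousOn g s) (ha : a ∈ s) (hx : x ∈ s) :
    HasDerivAt (fun u => ∫ t in a..u, g t) (g x) x :=
  intervalIntegral.integral_hasDerivAt_right
    ((hg.mono (Set.OrdConnected.uIcc_subset ‹_› ha hx)).intervalIntegrable)
    (hg.stronglyMeasurableAtFilter hs x hx) (hg.continuousAt (hs.mem_nhds hx))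

theorem deriv_neg_eq_of_odd {h : ℝ → ℝ} {t : ℝ} (hodd : ∀ᶠ s in 𝓝 t, h (-s) = -h s) :
    deriv h (-t) = deriv h t := by
  have hh : (fun s => -h (-s)) =ᶠ[𝓝 t] h := hodd.mono fun s hs => by simp only [hs, neg_neg]
  rw [← hh.deriv_eq, deriv.fun_neg, deriv_comp_neg, neg_neg]

theorem deriv_abs_eq_of_odd {h : ℝ → ℝ} {t : ℝ} (hodd : ∀ᶠ s in 𝓝 t, h (-s) = -h s) :
    deriv h |t| = deriv h t := by
  rcases abs_choice t with ht | ht <;> rw [ht]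
  exact deriv_neg_eq_of_odd hodd

theorem HasDerivAt.of_sq_eq_of_pos {X G : ℝ → ℝ} {x G' : ℝ} (hG : HasDerivAt G G' x)
    (hXc : ContinuousAt X x) (hXx : 0 < X x) (hX2 : ∀ᶠ y in 𝓝 x, X y ^ 2 = G y) :
    HasDerivAt X (G' / (2 * X x)) x := by
  have hsqrt : (fun y => √(G y)) =ᶠ[𝓝 x] X := by
    filter_upwards [hX2, hXc.eventually_const_lt hXx] with y hy hpos
    rw [← hy, Real.sqrt_sq hpos.le]
  have hGx : G x ≠ 0 := by rw [← hX2.self_of_nhds]; positivity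
  rw [← hsqrt.eq_of_nhds]
  exact (hG.sqrt hGx).congr_of_eventuallyEq hsqrt.symm

theorem HasDerivAt.of_sq_eq {X G : ℝ → ℝ} {x G' : ℝ} (hG : HasDerivAt G G' x)
    (hXc : ContinuousAt X x) (hXx : X x ≠ 0) (hX2 : ∀ᶠ y in 𝓝 x, X y ^ 2 = G y) :
    HasDerivAt X (G' / (2 * X x)) x := by
  rcases hXx.lt_or_gt with hneg | hpos
  · have hnegX := hG.of_sq_eq_of_pos hXc.neg (neg_pos.2 hneg)
      (hX2.mono fun y hy => by rw [Pi.neg_apply, neg_sq, hy])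
    simpa [mul_neg, div_neg] using hnegX.neg
  · exact hG.of_sq_eq_of_pos hXc hpos hX2

theorem div_sq_eq_of_urabe {lam X G H g : ℝ} (hlam : lam ≠ 0) (hX : X ≠ 0)
    (hX2 : X ^ 2 = 2 * G) (hg : g = lam * X / (1 + H)) :
    G / g ^ 2 = (1 + H) ^ 2 / (2 * lam ^ 2) := by
  -- if `1 + H = 0`, both sides vanish by the convention `a / 0 = 0`
  rcases eq_or_ne (1 + H) 0 with hH | hH
  · simp [hg, hH]
  · rw [hg, show G = X ^ 2 / 2 by linarith]
    field_simp

theorem hasDerivAt_div_sq_of_urabe {lam x : ℝ} {g G X h : ℝ → ℝ} (hlam : lam ≠ 0)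
    (hG : HasDerivAt G (g x) x) (hXc : ContinuousAt X x) (hXx : X x ≠ 0)
    (hX2 : ∀ᶠ y in 𝓝 x, X y ^ 2 = 2 * G y) (hh : DifferentiableAt ℝ h (X x))
    (hh1 : 1 + h (X x) ≠ 0) (hUrabe : ∀ᶠ y in 𝓝 x, g y = lam * X y / (1 + h (X y))) :
    HasDerivAt (fun y => G y / g y ^ 2) (deriv h (X x) / lam) x := by
  have hX := (hG.const_mul 2).of_sq_eq hXc hXx hX2
  have hQ := (((hh.hasDerivAt.comp x hX).const_add 1).pow 2).div_const (2 * lam ^ 2)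
  have hQeq : (fun y => G y / g y ^ 2) =ᶠ[𝓝 x] fun y => (1 + h (X y)) ^ 2 / (2 * lam ^ 2) := by
    filter_upwards [hX2, hUrabe, hXc.eventually_ne hXx] with y hy2 hyU hy0
    exact div_sq_eq_of_urabe hlam hy0 hy2 hyU
  refine (hQ.congr_of_eventuallyEq hQeq).congr_deriv ?_
  rw [hUrabe.self_of_nhds, Function.comp_apply]
  field_simp
  ring

theorem stmt_18_general (ε r lam : ℝ) (hε : 0 < ε) (hr : 0 < r) (hlam : 0 < lam)
    (g G X h f : ℝ → ℝ)
    (hg : ContDiffOn ℝ 1 g (Ioo (-ε) ε))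
    (hG : ∀ x, G x = ∫ u in (0:ℝ)..x, g u)
    (hXcont : ∀ᶠ x in nhds (0:ℝ), ContinuousAt X x)
    (hX2 : ∀ᶠ x in nhds (0:ℝ), (X x) ^ 2 = 2 * G x)
    (hXsgn : ∀ᶠ x in nhds (0:ℝ), x ≠ 0 → 0 < x * X x)
    (hh : ContDiffOn ℝ 1 h (Ioo (-r) r))
    (hodd : ∀ s ∈ Ioo (-r) r, h (-s) = -h s)
    (hUrabe : ∀ᶠ x in nhds (0:ℝ), g x = lam * X x / (1 + h (X x)))
    (hf : ∀ s, 0 ≤ s → f s = (1 / lam) * deriv h (Real.sqrt (2 * s))) :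
    ∃ δ > 0, ∀ x, |x| < δ → x ≠ 0 →
      HasDerivAt (fun y => G y / (g y) ^ 2) (f (G x)) x := by
  have hr0 : (0 : ℝ) ∈ Ioo (-r) r := ⟨neg_lt_zero.2 hr, hr⟩
  have hX0 : X 0 = 0 := pow_eq_zero_iff two_ne_zero |>.1 (by simpa [hG] using hX2.self_of_nhds)
  have hh0 : h 0 = 0 := by linarith [neg_zero (G := ℝ) ▸ hodd 0 hr0]
  have hXr : ∀ᶠ y in 𝓝 0, X y ∈ Ioo (-r) r :=
    hXcont.self_of_nhds.preimage_mem_nhds (by rw [hX0]; exact isOpen_Ioo.mem_nhds hr0)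
  have hh1 : ∀ᶠ y in 𝓝 0, 1 + h (X y) ≠ 0 := by
    have hhc : ContinuousAt h (X 0) := by
      rw [hX0]; exact hh.continuousOn.continuousAt (isOpen_Ioo.mem_nhds hr0)
    exact (continuousAt_const.add (hhc.comp hXcont.self_of_nhds)).eventually_ne
      (by simp [hX0, hh0])
  obtain ⟨δ, hδ, hnear⟩ := Metric.eventually_nhds_iff.1 <| eventually_eventually_nhds.2 <|
    hXcont.and <| hX2.and <| hXsgn.and <| hUrabe.and <| hXr.and <| hh1.and <|
      Ioo_mem_nhds (neg_lt_zero.2 hε) hε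
  refine ⟨δ, hδ, fun x hx hx0 => ?_⟩
  have hPx := hnear (by simpa [Real.dist_eq] using hx)
  obtain ⟨hXc, hX2x, hsgn, -, hXx, hh1x, hxε⟩ := hPx.self_of_nhds
  have hX0x : X x ≠ 0 := fun h0 => by simpa [h0] using hsgn hx0
  have hGx : HasDerivAt G (g x) x := by
    simpa only [← hG] using hasDerivAt_integral_of_continuousOn isOpen_Ioo hg.continuousOn
      ⟨neg_lt_zero.2 hε, hε⟩ hxε
  rw [hf _ (by nlinarith [sq_nonneg (X x)]), ← hX2x, Real.sqrt_sq_eq_abs,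
    deriv_abs_eq_of_odd (eventually_of_mem (isOpen_Ioo.mem_nhds hXx) hodd), one_div_mul_eq_div]
  exact hasDerivAt_div_sq_of_urabe hlam.ne' hGx hXc hX0x (hPx.mono fun _ hy => hy.2.1)
    ((hh.contDiffAt (isOpen_Ioo.mem_nhds hXx)).differentiableAt one_ne_zero) hh1x
    (hPx.mono fun _ hy => hy.2.2.2.1)

theorem stmt_18 (ε r lam : ℝ) (hε : 0 < ε) (hr : 0 < r) (hlam : 0 < lam)
    (g G X h f : ℝ → ℝ)
    (hg : ContDiffOn ℝ 1 g (Ioo (-ε) ε))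
    (hg0 : g 0 = 0) (hg'0 : deriv g 0 = lam ^ 2)
    (hG : ∀ x, G x = ∫ u in (0:ℝ)..x, g u)
    (hXcont : ∀ᶠ x in nhds (0:ℝ), ContinuousAt X x)
    (hX2 : ∀ᶠ x in nhds (0:ℝ), (X x) ^ 2 = 2 * G x)
    (hXsgn : ∀ᶠ x in nhds (0:ℝ), x ≠ 0 → 0 < x * X x)
    (hh : ContDiffOn ℝ 1 h (Ioo (-r) r))
    (hodd : ∀ s ∈ Ioo (-r) r, h (-s) = -h s)
    (hUrabe : ∀ᶠ x in nhds (0:ℝ), g x = lam * X x / (1 + h (X x)))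
    (hf : ∀ s, 0 ≤ s → f s = (1 / lam) * deriv h (Real.sqrt (2 * s))) :
    ∃ δ > 0, ∀ x, |x| < δ → x ≠ 0 →
      HasDerivAt (fun y => G y / (g y) ^ 2) (f (G x)) x :=
  stmt_18_general ε r lam hε hr hlam g G X h f hg hG hXcont hX2 hXsgn hh hodd hUrabe hf
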